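/- There exists a Borel measurable map f : Mat(N,ℝ) → O(N) such that for every N×N real matrix m one has m = (m mᵀ)^{1/2} · f(m), where (m mᵀ)^{1/2} denotes the positive semidefinite square root of m mᵀ. Consequently, for any real random matrix A there is a σ(A)-measurable random orthogonal matrix U with A = (A Aᵀ)^{1/2}·U almost surely. -/

import Mathlib

open MeasureTheory ProbabilityTheory Matrix Filter
open scoped ENNReal Topology

noncomputable section

/-- The space of `N × N` real matrices. -/
abbrev Mat (N : ℕ) := Matrix (Fin N) (Fin N) ℝ

instance (N : ℕ) : MeasurableSpace (Mat N) :=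
  inferInstanceAs (MeasurableSpace (Fin N → Fin N → ℝ))

instance (N : ℕ) : BorelSpace (Mat N) :=
  inferInstanceAs (BorelSpace (Fin N → Fin N → ℝ))

open scoped Classical in
/-- The eigenvalues of a matrix (junk value `0` if the matrix is not symmetric). -/
def eigs {N : ℕ} (s : Mat N) : Fin N → ℝ :=
  if h : s.IsHermitian then h.eigenvalues else fun _ => 0

/-- The largest eigenvalue of a symmetric matrix. -/
def lambdaMax {N : ℕ} (s : Mat N) : ℝ := ⨆ i, eigs s i

/-- The eigenvalues of a symmetric matrix in nonincreasing order:
`eigDesc s k` is the `(k+1)`-th largest eigenvalue `λ_{k+1}(s)`. -/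
def eigDesc {N : ℕ} (s : Mat N) (k : Fin N) : ℝ :=
  (eigs s ∘ Tuple.sort (eigs s)) k.rev

open scoped Classical in
/-- The positive semidefinite square root of a positive semidefinite matrix
(junk value `0` otherwise). -/
def msqrt {N : ℕ} (a : Mat N) : Mat N :=
  if h : a.PosSemidef then
    (h.1.eigenvectorUnitary : Mat N) * diagonal (fun i => Real.sqrt (h.1.eigenvalues i)) *
      (star h.1.eigenvectorUnitary : Mat N)
  else 0

/-- `log⁺ x = max (log x) 0`. -/
def logPlus (x : ℝ) : ℝ := max (Real.log x) 0

/-- The expectation of a (not necessarily integrable) real random variable, with values in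
`[-∞, +∞]`: the difference of the lower integrals of the positive and negative parts. -/
def sInt {Ω : Type*} [MeasurableSpace Ω] (P : Measure Ω) (f : Ω → ℝ) : EReal :=
  ((∫⁻ ω, ENNReal.ofReal (f ω) ∂P : ℝ≥0∞) : EReal) -
    ((∫⁻ ω, ENNReal.ofReal (-f ω) ∂P : ℝ≥0∞) : EReal)

/-- `leftProd A n = A₁ ⋯ A_n` (`0`-indexed: `A 0 * A 1 * ⋯ * A (n-1)`). -/
def leftProd {Ω : Type*} {N : ℕ} (A : ℕ → Ω → Mat N) : ℕ → Ω → Mat N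
  | 0 => fun _ => 1
  | n + 1 => fun ω => leftProd A n ω * A n ω

/-- The top Lyapunov exponent
`γ = inf_{n ≥ 1} (1/n) E[log λ_max(A₁ ⋯ A_n A_nᵀ ⋯ A₁ᵀ)]`, a value in `[-∞, +∞)`. -/
def lyap {Ω : Type*} [MeasurableSpace Ω] {N : ℕ} (P : Measure Ω) (A : ℕ → Ω → Mat N) : EReal :=
  ⨅ n : ℕ, (((1 : ℝ) / (n + 1) : ℝ) : EReal) *
    sInt P (fun ω => Real.log (lambdaMax (leftProd A (n + 1) ω * (leftProd A (n + 1) ω)ᵀ)))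

/-- The `k × k` leading principal submatrix. -/
def subK {N k : ℕ} (hk : k ≤ N) (x : Mat N) : Mat k :=
  x.submatrix (Fin.castLE hk) (Fin.castLE hk)

end

/-!
If `u` is orthogonal and `m uᵀ` is positive semidefinite, then `(m uᵀ)² = m mᵀ`, so `m uᵀ` is the
square root of `m mᵀ` and `m = (m mᵀ)^{1/2} u`. Such `u` exist for invertible `m`
(`u = (m mᵀ)^{-1/2} m`); as they range over the compact orthogonal group, the set of `m` admitting
one in a given closed set is closed, so by density of invertible matrices they exist for every `m`.
A Borel choice is then made as in the Kuratowski–Ryll-Nardzewski theorem: approximate a point of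
the fibre to within `2⁻ᵏ` by the first admissible term of a dense sequence, each approximation
close to the previous one, and pass to the limit.
-/

open Metric

section MeasurableSelection

variable {X Y : Type*} [PseudoMetricSpace Y]

theorem IsClosed.mem_of_tendsto_of_inter_closedBall_nonempty {s : Set Y} (hs : IsClosed s)
    {c : ℕ → Y} {r : ℕ → ℝ} {a : Y} (hc : Tendsto c atTop (𝓝 a)) (hr : Tendsto r atTop (𝓝 0))
    (h : ∀ k, (s ∩ closedBall (c k) (r k)).Nonempty) : a ∈ s := by
  choose w hws hwc using h
  have hw : Tendsto w atTop (𝓝 a) := by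
    rw [tendsto_iff_dist_tendsto_zero]
    refine squeeze_zero (fun _ => dist_nonneg)
      (fun k => (dist_triangle (w k) (c k) a).trans (add_le_add_left (hwc k) _)) ?_
    simpa using hr.add (tendsto_iff_dist_tendsto_zero.mp hc)
  exact hs.mem_of_tendsto hw (.of_forall hws)

variable {d : ℕ → Y}

lemma DenseRange.exists_inter_closedBall_nonempty (hd : DenseRange d) {s : Set Y}
    (hs : s.Nonempty) {r : ℝ} (hr : 0 < r) : ∃ n, (s ∩ closedBall (d n) r).Nonempty := by
  obtain ⟨y, hy⟩ := hs
  obtain ⟨n, hn⟩ := hd.exists_dist_lt y hr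
  exact ⟨n, y, hy, hn.le⟩

lemma DenseRange.exists_inter_closedBall_succ_nonempty (hd : DenseRange d) {s : Set Y} {k n : ℕ}
    (h : (s ∩ closedBall (d n) ((1 / 2) ^ k)).Nonempty) :
    ∃ n', (s ∩ closedBall (d n') ((1 / 2) ^ (k + 1))).Nonempty ∧
      dist (d n') (d n) ≤ 2 * (1 / 2) ^ k := by
  obtain ⟨y, hy, hyn⟩ := h
  obtain ⟨n', hn'⟩ := hd.exists_dist_lt y (show (0 : ℝ) < (1 / 2) ^ (k + 1) by positivity)
  refine ⟨n', ⟨y, hy, hn'.le⟩, ?_⟩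
  calc dist (d n') (d n) ≤ dist (d n') y + dist y (d n) := dist_triangle _ _ _
    _ ≤ (1 / 2) ^ (k + 1) + (1 / 2) ^ k := add_le_add (dist_comm y (d n') ▸ hn'.le) hyn
    _ ≤ 2 * (1 / 2) ^ k := by rw [pow_succ]; linarith [pow_nonneg (by norm_num : (0 : ℝ) ≤ 1 / 2) k]

variable {S : X → Set Y}

open scoped Classical in
/-- `d (selectionIndex hne hd k x)` lies within `2⁻ᵏ` of `S x` and within `2 ⬝ 2⁻ᵏ` of the previous
approximation; taking the least admissible index is what makes it measurable in `x`. -/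
noncomputable def selectionIndex (hne : ∀ x, (S x).Nonempty) (hd : DenseRange d) :
    (k : ℕ) → (x : X) → {n : ℕ // (S x ∩ closedBall (d n) ((1 / 2) ^ k)).Nonempty}
  | 0, x => ⟨_, Nat.find_spec (hd.exists_inter_closedBall_nonempty (hne x) one_pos)⟩
  | k + 1, x => ⟨_, (Nat.find_spec
      (hd.exists_inter_closedBall_succ_nonempty (selectionIndex hne hd k x).2)).1⟩

section

variable (hne : ∀ x, (S x).Nonempty) (hd : DenseRange d)

lemma dist_selectionIndex_succ_le (k : ℕ) (x : X) :
    dist (d (selectionIndex hne hd (k + 1) x)) (d (selectionIndex hne hd k x)) ≤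
      2 * (1 / 2) ^ k := by
  classical
  exact (Nat.find_spec (hd.exists_inter_closedBall_succ_nonempty (selectionIndex hne hd k x).2)).2

lemma measurable_selectionIndex [MeasurableSpace X]
    (hmeas : ∀ y r, MeasurableSet {x | (S x ∩ closedBall y r).Nonempty}) (k : ℕ) :
    Measurable fun x => (selectionIndex hne hd k x : ℕ) := by
  classical
  induction k with
  | zero => exact measurable_find _ fun n => hmeas _ _
  | succ k ih =>
    refine measurable_find _ fun n => (hmeas _ _).inter ?_
    exact ih (.of_discrete (s := {j | dist (d n) (d j) ≤ 2 * (1 / 2) ^ k}))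

end

theorem exists_measurable_forall_mem_of_closedBall [MeasurableSpace X] [CompleteSpace Y]
    [TopologicalSpace.SeparableSpace Y] [MeasurableSpace Y] [BorelSpace Y]
    (hne : ∀ x, (S x).Nonempty) (hcl : ∀ x, IsClosed (S x))
    (hmeas : ∀ y r, MeasurableSet {x | (S x ∩ closedBall y r).Nonempty}) :
    ∃ f : X → Y, Measurable f ∧ ∀ x, f x ∈ S x := by
  rcases isEmpty_or_nonempty X with _ | ⟨⟨x₀⟩⟩
  · exact ⟨isEmptyElim, measurable_of_empty _, isEmptyElim⟩
  have : Nonempty Y := ⟨(hne x₀).some⟩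
  obtain ⟨d, hd⟩ := TopologicalSpace.exists_dense_seq Y
  set c : ℕ → X → Y := fun k x => d (selectionIndex hne hd k x)
  have hc : ∀ x, CauchySeq (c · x) := fun x =>
    cauchySeq_of_le_geometric (1 / 2) 2 (by norm_num) fun k =>
      dist_comm (c k x) _ ▸ dist_selectionIndex_succ_le hne hd k x
  choose f hf using fun x => cauchySeq_tendsto_of_complete (hc x)
  refine ⟨f, measurable_of_tendsto_metrizable' atTop
    (fun k => measurable_from_nat.comp (measurable_selectionIndex hne hd hmeas k))
    (tendsto_pi_nhds.2 hf), fun x => ?_⟩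
  exact (hcl x).mem_of_tendsto_of_inter_closedBall_nonempty (hf x)
    (tendsto_pow_atTop_nhds_zero_of_lt_one (by norm_num) (by norm_num))
    fun k => (selectionIndex hne hd k x).2

end MeasurableSelection

theorem exists_measurable_forall_mem {X Y : Type*} [MeasurableSpace X] [TopologicalSpace Y]
    [PolishSpace Y] [MeasurableSpace Y] [BorelSpace Y] {S : X → Set Y}
    (hne : ∀ x, (S x).Nonempty) (hcl : ∀ x, IsClosed (S x))
    (hmeas : ∀ F, IsClosed F → MeasurableSet {x | (S x ∩ F).Nonempty}) :
    ∃ f : X → Y, Measurable f ∧ ∀ x, f x ∈ S x :=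
  letI := TopologicalSpace.upgradeIsCompletelyMetrizable Y
  exists_measurable_forall_mem_of_closedBall hne hcl fun _ _ => hmeas _ isClosed_closedBall

theorem IsCompact.isClosed_setOf_exists_mem {X Y : Type*} [TopologicalSpace X] [TopologicalSpace Y]
    {K : Set Y} (hK : IsCompact K) {G : Set (X × Y)} (hG : IsClosed G) :
    IsClosed {x | ∃ y ∈ K, (x, y) ∈ G} := by
  have : CompactSpace K := isCompact_iff_compactSpace.mp hK
  have hG' : IsClosed {p : X × K | (p.1, (p.2 : Y)) ∈ G} := hG.preimage (by fun_prop)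
  convert isClosedMap_fst_of_compactSpace _ hG' using 1
  ext x
  simp

namespace Matrix

variable {n : Type*} [Fintype n]

open scoped ComplexOrder in
theorem isClosed_setOf_posSemidef {𝕜 : Type*} [RCLike 𝕜] :
    IsClosed {A : Matrix n n 𝕜 | A.PosSemidef} := by
  simp only [posSemidef_iff_dotProduct_mulVec, Set.ofPred_and, Set.ofPred_forall]
  refine (isClosed_eq continuous_id.matrix_conjTranspose continuous_id).inter <|
    isClosed_iInter fun x => isClosed_le continuous_const ?_
  exact continuous_const.dotProduct (continuous_id.matrix_mulVec continuous_const)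

variable [DecidableEq n]

theorem isCompact_unitaryGroup {𝕜 : Type*} [RCLike 𝕜] :
    IsCompact (unitaryGroup n 𝕜 : Set (Matrix n n 𝕜)) := by
  have hclosed : IsClosed (unitaryGroup n 𝕜 : Set (Matrix n n 𝕜)) := by
    have : (unitaryGroup n 𝕜 : Set (Matrix n n 𝕜)) = {U | U * star U = 1} :=
      Set.ext fun _ => mem_unitaryGroup_iff
    exact this ▸ isClosed_eq (continuous_id.mul continuous_star) continuous_const
  refine (isCompact_univ_pi fun _ => isCompact_univ_pi fun _ =>
    isCompact_closedBall (0 : 𝕜) 1).of_isClosed_subset hclosed fun U hU => ?_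
  simpa using entry_norm_bound_of_unitary hU

theorem dense_setOf_det_ne_zero {𝕜 : Type*} [NontriviallyNormedField 𝕜] [CompleteSpace 𝕜] :
    Dense {A : Matrix n n 𝕜 | A.det ≠ 0} := by
  intro A
  have hroots : {t : 𝕜 | (-A).charpoly.IsRoot t}.Countable :=
    (Polynomial.finite_setOfPred_isRoot (charpoly_monic (-A)).ne_zero).countable
  have h0 : (0 : 𝕜) ∈ closure {t : 𝕜 | (-A).charpoly.IsRoot t}ᶜ := (hroots.dense_compl 𝕜) 0
  convert map_mem_closure (f := fun t : 𝕜 => A + t • 1) (by fun_prop) h0 fun t ht => ?_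
  · simp
  · simpa [Polynomial.IsRoot, eval_charpoly, scalar_apply, smul_one_eq_diagonal, add_comm] using ht

end Matrix

instance (N : ℕ) : PolishSpace (Mat N) :=
  inferInstanceAs (PolishSpace (Fin N → Fin N → ℝ))

section Polar

open scoped MatrixOrder

variable {N : ℕ}

lemma msqrt_eq_cfcSqrt {a : Mat N} (h : a.PosSemidef) : msqrt a = CFC.sqrt a := by
  rw [msqrt, dif_pos h, CFC.sqrt_eq_cfc, cfc_nnreal_eq_real _ a, h.1.cfc_eq]
  simp only [IsHermitian.cfc, RCLike.ofReal_real_eq_id, Real.coe_sqrt, Real.coe_toNNReal',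
    Function.comp_def, id_eq, Unitary.conjStarAlgAut_apply,
    max_eq_left (h.eigenvalues_nonneg _)]

lemma posSemidef_mul_transpose_self (m : Mat N) : (m * mᵀ).PosSemidef := by
  simpa using posSemidef_self_mul_conjTranspose m

def polarFactors (m : Mat N) : Set (Mat N) :=
  {u | u ∈ orthogonalGroup (Fin N) ℝ ∧ (m * uᵀ).PosSemidef}

lemma eq_msqrt_mul_of_mem_polarFactors {m u : Mat N} (hu : u ∈ polarFactors m) :
    m = msqrt (m * mᵀ) * u := by
  obtain ⟨horth, hpsd⟩ := hu
  have hu' : uᵀ * u = 1 := mul_eq_one_comm.mp ((mem_orthogonalGroup_iff _ _).mp horth)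
  have hsymm : (m * uᵀ)ᵀ = m * uᵀ := by simpa using hpsd.isHermitian.eq
  have hsq : m * uᵀ * (m * uᵀ) = m * mᵀ :=
    calc m * uᵀ * (m * uᵀ) = m * uᵀ * (m * uᵀ)ᵀ := by rw [hsymm]
      _ = m * (uᵀ * u) * mᵀ := by simp only [transpose_mul, transpose_transpose, mul_assoc]
      _ = m * mᵀ := by rw [hu', mul_one]
  have hsqrt : msqrt (m * mᵀ) = m * uᵀ := by
    rw [msqrt_eq_cfcSqrt (posSemidef_mul_transpose_self m),
      CFC.sqrt_eq_iff _ _ (posSemidef_mul_transpose_self m).nonneg hpsd.nonneg]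
    exact hsq
  rw [hsqrt, mul_assoc, hu', mul_one]

lemma polarFactors_nonempty_of_det_ne_zero {m : Mat N} (hm : m.det ≠ 0) :
    (polarFactors m).Nonempty := by
  set s := CFC.sqrt (m * mᵀ)
  have hs : s.PosSemidef := (CFC.sqrt_nonneg _).posSemidef
  have hss : s * s = m * mᵀ :=
    CFC.sqrt_mul_sqrt_self _ (posSemidef_mul_transpose_self m).nonneg
  have hsymm : sᵀ = s := by simpa using hs.isHermitian.eq
  have hdet : IsUnit s.det := by
    refine isUnit_iff_ne_zero.mpr fun h0 => hm ?_
    have := congrArg det hss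
    rw [det_mul, det_mul, det_transpose, h0, zero_mul] at this
    exact mul_self_eq_zero.mp this.symm
  have hinvT : (s⁻¹ * m)ᵀ = mᵀ * s⁻¹ := by rw [transpose_mul, transpose_nonsing_inv, hsymm]
  have hfactor : m * (s⁻¹ * m)ᵀ = s := by
    rw [hinvT, ← mul_assoc, ← hss, mul_nonsing_inv_cancel_right s s hdet]
  refine ⟨s⁻¹ * m, (mem_orthogonalGroup_iff _ _).mpr ?_, by rwa [hfactor]⟩
  rw [mul_assoc, hfactor, nonsing_inv_mul _ hdet]

lemma isClosed_setOf_mem_polarFactors : IsClosed {p : Mat N × Mat N | p.2 ∈ polarFactors p.1} :=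
  (isCompact_unitaryGroup.isClosed.preimage continuous_snd).inter <|
    isClosed_setOf_posSemidef.preimage (by fun_prop)

lemma isClosed_polarFactors (m : Mat N) : IsClosed (polarFactors m) :=
  isClosed_setOf_mem_polarFactors.preimage (Continuous.prodMk_right m)

lemma isClosed_setOf_polarFactors_inter_nonempty {F : Set (Mat N)} (hF : IsClosed F) :
    IsClosed {m | (polarFactors m ∩ F).Nonempty} := by
  convert isCompact_unitaryGroup.isClosed_setOf_exists_mem
    (isClosed_setOf_mem_polarFactors.inter (hF.preimage continuous_snd)) using 1
  ext m
  exact ⟨fun ⟨u, hu, huF⟩ => ⟨u, hu.1, hu, huF⟩, fun ⟨u, _, hu, huF⟩ => ⟨u, hu, huF⟩⟩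

lemma polarFactors_nonempty (m : Mat N) : (polarFactors m).Nonempty := by
  have hsub : {m : Mat N | m.det ≠ 0} ⊆ {m | (polarFactors m ∩ Set.univ).Nonempty} :=
    fun m hm => by simpa using polarFactors_nonempty_of_det_ne_zero hm
  have hm : m ∈ closure {m : Mat N | m.det ≠ 0} := dense_setOf_det_ne_zero m
  simpa using closure_minimal hsub (isClosed_setOf_polarFactors_inter_nonempty isClosed_univ) hm

end Polar

/-- Measurable polar decomposition: there is a Borel measurable map
`f : Mat(N,ℝ) → O(N)` with `m = (m mᵀ)^{1/2} f(m)` for every matrix `m`; consequently,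
for any random matrix `A` there is a `σ(A)`-measurable random orthogonal matrix `U` with
`A = (A Aᵀ)^{1/2} U` almost surely. -/
theorem measurable_polar_decomposition (N : ℕ) :
    ∃ f : Mat N → Mat N, Measurable f ∧
      (∀ m : Mat N, f m * (f m)ᵀ = 1) ∧
      (∀ m : Mat N, m = msqrt (m * mᵀ) * f m) ∧
      ∀ (Ω : Type) [MeasurableSpace Ω] (P : Measure Ω), IsProbabilityMeasure P →
        ∀ A : Ω → Mat N, Measurable A →
          ∃ U : Ω → Mat N,
            Measurable[MeasurableSpace.comap A inferInstance] U ∧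
            (∀ ω, U ω * (U ω)ᵀ = 1) ∧
            ∀ᵐ ω ∂P, A ω = msqrt (A ω * (A ω)ᵀ) * U ω := by
  obtain ⟨f, hf, hpolar⟩ := exists_measurable_forall_mem polarFactors_nonempty
    isClosed_polarFactors fun _ hF => (isClosed_setOf_polarFactors_inter_nonempty hF).measurableSet
  have horth : ∀ m, f m * (f m)ᵀ = 1 := fun m => (mem_orthogonalGroup_iff _ _).mp (hpolar m).1
  have hdecomp : ∀ m, m = msqrt (m * mᵀ) * f m := fun m =>
    eq_msqrt_mul_of_mem_polarFactors (hpolar m)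
  refine ⟨f, hf, horth, hdecomp, fun Ω _ P _ A _ => ?_⟩
  exact ⟨f ∘ A, hf.comp (comap_measurable A), fun ω => horth (A ω),
    .of_forall fun ω => hdecomp (A ω)⟩
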